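/- Let U, V ⊆ ℝ² be transverse sets, let μ > 0, and let K₁, K₂ : ℤ² × ℤ² → ℝ be nonnegative functions such that K₁(x,y) ≤ μ⁻¹ exp(−μ(‖x−y‖ + d(x,∂U) + d(y,∂U))) and K₂(x,y) ≤ μ⁻¹ exp(−μ(‖x−y‖ + d(x,∂V) + d(y,∂V))) for all x, y ∈ ℤ². Then the family (x, z, y) ↦ K₁(x,z) · K₂(z,y) is summable over ℤ² × ℤ² × ℤ². (This is the kernel-level statement that the product of the two commutator kernels [Λ_U, P] and [Λ_V, P] is of trace class.) -/

import Mathlib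

open Metric Set

noncomputable section

/-- The canonical embedding of `ℤ²` into the Euclidean plane. -/
def emb (p : ℤ × ℤ) : EuclideanSpace ℝ (Fin 2) :=
  (WithLp.equiv 2 (Fin 2 → ℝ)).symm ![(p.1 : ℝ), (p.2 : ℝ)]

/-- Two subsets of the plane are transverse if `Ψ_{U,V}(x) = 1 + d(x,∂U) + d(x,∂V)`
grows at least like a positive power of `‖x‖`. -/
def Transverse (U V : Set (EuclideanSpace ℝ (Fin 2))) : Prop :=
  ∃ c : ℝ, 0 < c ∧ ∃ ρ : ℝ, 0 < ρ ∧ ∀ x : EuclideanSpace ℝ (Fin 2), ρ ≤ ‖x‖ →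
    ‖x‖ ^ c ≤ 1 + infDist x (frontier U) + infDist x (frontier V)

/-!
Only the decay in `‖x - z‖`, `‖z - y‖` and in the distances of the middle point `z` to `∂U` and
`∂V` is kept. Transversality gives `d(z,∂U) + d(z,∂V) ≥ ‖z‖^c - C`, so `K₁(x,z) K₂(z,y)` is
dominated by `f(x - z) g(z) f(z - y)` with `f(w) = exp(-μ‖w‖)` and `g(z) = exp(-μ‖z‖^c)`, both
summable over `ℤ²` because `c > 0`; and `(x, z, y) ↦ (x - z, z, z - y)` is a bijection of `(ℤ²)³`.
-/

open Real Filter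

lemma abs_fst_le_norm_emb (z : ℤ × ℤ) : |(z.1 : ℝ)| ≤ ‖emb z‖ :=
  PiLp.norm_apply_le (emb z) 0

lemma abs_snd_le_norm_emb (z : ℤ × ℤ) : |(z.2 : ℝ)| ≤ ‖emb z‖ :=
  PiLp.norm_apply_le (emb z) 1

lemma emb_sub (x y : ℤ × ℤ) : emb x - emb y = emb (x - y) := by
  ext i
  fin_cases i <;> simp [emb]

lemma summable_exp_neg_mul_abs_rpow {a c : ℝ} (ha : 0 < a) (hc : 0 < c) :
    Summable fun n : ℤ => exp (-a * |(n : ℝ)| ^ c) := by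
  have h_abs_rpow : Tendsto (fun n : ℤ => |(n : ℝ)| ^ c) cofinite atTop :=
    (tendsto_rpow_atTop hc).comp (tendsto_norm_cocompact_atTop.comp Int.tendsto_coe_cofinite)
  refine summable_of_isBigO (summable_abs_int_rpow one_lt_two) ?_
  refine ((isLittleO_exp_neg_mul_rpow_atTop ha (-2 / c)).comp_tendsto
    h_abs_rpow).isBigO.congr_right fun n => ?_
  rw [Function.comp_apply, ← rpow_mul (abs_nonneg _), mul_div_cancel₀ _ hc.ne']

lemma summable_exp_neg_mul_norm_emb_rpow {a c : ℝ} (ha : 0 < a) (hc : 0 < c) :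
    Summable fun z : ℤ × ℤ => exp (-a * ‖emb z‖ ^ c) := by
  have h_half := summable_exp_neg_mul_abs_rpow (half_pos ha) hc
  refine .of_nonneg_of_le (fun _ => (exp_pos _).le) (fun z => ?_)
    (h_half.mul_of_nonneg h_half (fun _ => (exp_pos _).le) (fun _ => (exp_pos _).le))
  rw [← exp_add, exp_le_exp]
  have h₁ := rpow_le_rpow (abs_nonneg _) (abs_fst_le_norm_emb z) hc.le
  have h₂ := rpow_le_rpow (abs_nonneg _) (abs_snd_le_norm_emb z) hc.le
  nlinarith

lemma summable_mul_sub_mul_sub {G : Type*} [AddCommGroup G] {f w h : G → ℝ}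
    (hf : Summable f) (hw : Summable w) (hh : Summable h) (hf0 : 0 ≤ f) (hw0 : 0 ≤ w)
    (hh0 : 0 ≤ h) :
    Summable fun p : G × G × G => f (p.1 - p.2.1) * w p.2.1 * h (p.2.1 - p.2.2) := by
  let e : G × G × G ≃ G × G × G :=
    { toFun := fun p => (p.1 - p.2.1, p.2.1, p.2.1 - p.2.2)
      invFun := fun q => (q.1 + q.2.1, q.2.1, q.2.1 - q.2.2)
      left_inv := fun p => by simp
      right_inv := fun q => by simp }
  have h_prod := hf.mul_of_nonneg (hw.mul_of_nonneg hh hw0 hh0) hf0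
    fun _ => mul_nonneg (hw0 _) (hh0 _)
  refine (e.summable_iff.mpr h_prod).congr fun p => ?_
  simp [e, mul_assoc]

lemma Transverse.exists_rpow_sub_le {U V : Set (EuclideanSpace ℝ (Fin 2))} (h : Transverse U V) :
    ∃ c : ℝ, 0 < c ∧ ∃ C : ℝ,
      ∀ x, ‖x‖ ^ c - C ≤ infDist x (frontier U) + infDist x (frontier V) := by
  obtain ⟨c, hc, ρ, hρ, hgrowth⟩ := h
  refine ⟨c, hc, 1 + ρ ^ c, fun x => ?_⟩
  have hU : 0 ≤ infDist x (frontier U) := infDist_nonneg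
  have hV : 0 ≤ infDist x (frontier V) := infDist_nonneg
  rcases le_or_gt ρ ‖x‖ with hx | hx
  · linarith [hgrowth x hx, rpow_nonneg hρ.le c]
  · linarith [rpow_le_rpow (norm_nonneg x) hx.le hc.le]

/-- The paper's bound on the kernel of `[Λ_U, P]`, with `S = ∂U`. -/
def IsExpLocalizedNear (μ : ℝ) (S : Set (EuclideanSpace ℝ (Fin 2))) (K : ℤ × ℤ → ℤ × ℤ → ℝ) :
    Prop :=
  ∀ x y, K x y ≤ μ⁻¹ * exp (-μ * (‖emb x - emb y‖ + infDist (emb x) S + infDist (emb y) S))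

namespace IsExpLocalizedNear

variable {μ : ℝ} {S T : Set (EuclideanSpace ℝ (Fin 2))} {K K' : ℤ × ℤ → ℤ × ℤ → ℝ}

lemma le_exp_infDist_snd (hK : IsExpLocalizedNear μ S K) (hμ : 0 ≤ μ) (x y : ℤ × ℤ) :
    K x y ≤ μ⁻¹ * exp (-μ * (‖emb (x - y)‖ + infDist (emb y) S)) := by
  refine (hK x y).trans ?_
  rw [emb_sub, neg_mul, neg_mul]
  gcongr μ⁻¹ * exp (-(μ * ?_))
  linarith [infDist_nonneg (x := emb x) (s := S)]

lemma le_exp_infDist_fst (hK : IsExpLocalizedNear μ S K) (hμ : 0 ≤ μ) (x y : ℤ × ℤ) :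
    K x y ≤ μ⁻¹ * exp (-μ * (‖emb (x - y)‖ + infDist (emb x) S)) := by
  refine (hK x y).trans ?_
  rw [emb_sub, neg_mul, neg_mul]
  gcongr μ⁻¹ * exp (-(μ * ?_))
  linarith [infDist_nonneg (x := emb y) (s := S)]

lemma mul_le (hK : IsExpLocalizedNear μ S K) (hK' : IsExpLocalizedNear μ T K')
    (hK'_nonneg : ∀ x y, 0 ≤ K' x y) (hμ : 0 ≤ μ) {c C : ℝ}
    (h_growth : ∀ w, ‖w‖ ^ c - C ≤ infDist w S + infDist w T) (x z y : ℤ × ℤ) :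
    K x z * K' z y ≤ μ⁻¹ * μ⁻¹ * exp (μ * C) * (exp (-μ * ‖emb (x - z)‖) *
      exp (-μ * ‖emb z‖ ^ c) * exp (-μ * ‖emb (z - y)‖)) := by
  calc K x z * K' z y
      ≤ μ⁻¹ * exp (-μ * (‖emb (x - z)‖ + infDist (emb z) S)) *
        (μ⁻¹ * exp (-μ * (‖emb (z - y)‖ + infDist (emb z) T))) :=
        mul_le_mul (hK.le_exp_infDist_snd hμ x z) (hK'.le_exp_infDist_fst hμ z y)
          (hK'_nonneg z y) (by positivity)
    _ = μ⁻¹ * μ⁻¹ * exp (-μ * (‖emb (x - z)‖ + ‖emb (z - y)‖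
          + (infDist (emb z) S + infDist (emb z) T))) := by
        rw [mul_mul_mul_comm, ← exp_add]; ring_nf
    _ ≤ μ⁻¹ * μ⁻¹ * exp (-μ * (‖emb (x - z)‖ + ‖emb (z - y)‖ + (‖emb z‖ ^ c - C))) := by
        simp only [neg_mul]
        gcongr
        exact h_growth (emb z)
    _ = μ⁻¹ * μ⁻¹ * exp (μ * C) * (exp (-μ * ‖emb (x - z)‖) * exp (-μ * ‖emb z‖ ^ c) *
          exp (-μ * ‖emb (z - y)‖)) := by
        simp only [← exp_add, mul_assoc]; ring_nf

end IsExpLocalizedNear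

theorem double_commutator_trace_class (U V : Set (EuclideanSpace ℝ (Fin 2)))
    (hUV : Transverse U V) (μ : ℝ) (hμ : 0 < μ)
    (K₁ K₂ : ℤ × ℤ → ℤ × ℤ → ℝ)
    (hK₁pos : ∀ x y, 0 ≤ K₁ x y) (hK₂pos : ∀ x y, 0 ≤ K₂ x y)
    (hK₁ : ∀ x y : ℤ × ℤ, K₁ x y ≤ μ⁻¹ * Real.exp (-μ * (‖emb x - emb y‖
      + infDist (emb x) (frontier U) + infDist (emb y) (frontier U))))
    (hK₂ : ∀ x y : ℤ × ℤ, K₂ x y ≤ μ⁻¹ * Real.exp (-μ * (‖emb x - emb y‖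
      + infDist (emb x) (frontier V) + infDist (emb y) (frontier V)))) :
    Summable (fun p : (ℤ × ℤ) × (ℤ × ℤ) × (ℤ × ℤ) =>
      K₁ p.1 p.2.1 * K₂ p.2.1 p.2.2) := by
  obtain ⟨c, hc, C, h_growth⟩ := hUV.exists_rpow_sub_le
  have h_decay : Summable fun z : ℤ × ℤ => exp (-μ * ‖emb z‖) := by
    simpa using summable_exp_neg_mul_norm_emb_rpow hμ one_pos
  have h_dominant := (summable_mul_sub_mul_sub h_decay
    (summable_exp_neg_mul_norm_emb_rpow hμ hc) h_decay (fun _ => (exp_pos _).le)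
    (fun _ => (exp_pos _).le) (fun _ => (exp_pos _).le)).mul_left (μ⁻¹ * μ⁻¹ * exp (μ * C))
  exact .of_nonneg_of_le (fun p => mul_nonneg (hK₁pos _ _) (hK₂pos _ _))
    (fun p => IsExpLocalizedNear.mul_le hK₁ hK₂ hK₂pos hμ.le h_growth p.1 p.2.1 p.2.2) h_dominant
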